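/- arXiv:2503.16267 — 2 statements merged into one kernel-verified Lean document; each statement's English description precedes it below -/
import Mathlib

section
/- Let G be an abelian group containing a subgroup H isomorphic to ℤ/2^r (with r ≥ 1) such that the quotient G/H is isomorphic to (ℤ/2)^k for some k ≥ 1. Then G is isomorphic either to ℤ/2^{r+1} ⊕ (ℤ/2)^{k-1} or to ℤ/2^r ⊕ (ℤ/2)^k. -/
/-!
Since `G ⧸ H` is killed by `2`, we have `2 • G ≤ H = ⟨h⟩` with `h` of order `2 ^ r`. If `h = 2 • g₀`
then `g₀` has order `2 ^ (r + 1)`; otherwise every `2 • g` is an even multiple of `h`. Either way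
there is `g₀` of order `2 ^ m` with `2 • G ≤ ⟨2 • g₀⟩`. Then each coset of `⟨g₀⟩` contains an
element killed by `2` (namely `g - n • g₀` when `2 • g = n • 2 • g₀`), so the `𝔽₂`-vector space
`G ⧸ ⟨g₀⟩` lifts linearly into the `2`-torsion of `G`. This splits `G ≃+ ⟨g₀⟩ × G ⧸ ⟨g₀⟩`, and
counting elements gives the dimension of the quotient.
-/

open AddSubgroup

theorem Module.nonempty_linearEquiv_fin_fun_of_natCard_eq {K V : Type*} [DivisionRing K]
    [Finite K] [AddCommGroup V] [Module K V] {t : ℕ} (hcard : Nat.card V = Nat.card K ^ t) :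
    Nonempty (V ≃ₗ[K] (Fin t → K)) := by
  have : Finite V := Nat.finite_of_card_ne_zero (by simp [hcard, Nat.card_pos.ne'])
  have hrank : Module.finrank K V = t := by
    rw [Module.natCard_eq_pow_finrank (K := K)] at hcard
    exact Nat.pow_right_injective Finite.one_lt_card hcard
  exact ⟨LinearEquiv.ofFinrankEq V (Fin t → K) (by simp [hrank])⟩

section

variable {G : Type*} [AddCommGroup G]

theorem exists_addOrderOf_eq_and_eq_zmultiples {H : AddSubgroup G} {n : ℕ} (e : H ≃+ ZMod n) :
    ∃ h : G, addOrderOf h = n ∧ H = zmultiples h := by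
  refine ⟨e.symm 1, ?_, le_antisymm (fun x hx ↦ ?_) (zmultiples_le_of_mem (e.symm 1).2)⟩
  · rw [addOrderOf_coe, AddEquiv.addOrderOf_eq, ZMod.addOrderOf_one]
  · obtain ⟨k, hk⟩ := ZMod.intCast_surjective (e ⟨x, hx⟩)
    refine mem_zmultiples_iff.mpr ⟨k, ?_⟩
    rw [← coe_zsmul, ← map_zsmul, zsmul_one, hk, AddEquiv.symm_apply_apply]

theorem nsmul_mem_of_addEquiv_quotient {H : AddSubgroup G} {M : Type*} [AddCommGroup M] {n : ℕ}
    (f : G ⧸ H ≃+ M) (hM : ∀ x : M, n • x = 0) (g : G) : n • g ∈ H := by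
  rw [← QuotientAddGroup.eq_zero_iff, QuotientAddGroup.mk_nsmul, ← f.map_eq_zero_iff, map_nsmul]
  exact hM _

theorem AddSubgroup.nonempty_addEquiv_prod_quotient_of_section (C : AddSubgroup G)
    (s : G ⧸ C →+ G) (hs : ∀ q, (s q : G ⧸ C) = q) : Nonempty (G ≃+ C × (G ⧸ C)) := by
  refine ⟨(AddEquiv.ofBijective (C.subtype.coprod s) ⟨?_, fun g ↦ ?_⟩).symm⟩
  · rw [injective_iff_map_eq_zero]
    rintro ⟨c, q⟩ hcq
    simp only [AddMonoidHom.coprod_apply, AddSubgroup.coe_subtype] at hcq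
    have hq : q = 0 := by
      simpa [hs, (QuotientAddGroup.eq_zero_iff _).mpr c.2] using congrArg ((↑) : G → G ⧸ C) hcq
    subst hq
    simpa using hcq
  · have hg : g - s g ∈ C := by
      rw [← QuotientAddGroup.eq_zero_iff, QuotientAddGroup.mk_sub, hs, sub_self]
    exact ⟨(⟨g - s g, hg⟩, g), by simp⟩

theorem two_nsmul_mem_zmultiples_two_nsmul {h : G} (hG : ∀ g : G, 2 • g ∈ zmultiples h)
    (hh : ∀ g : G, 2 • g ≠ h) (g : G) : 2 • g ∈ zmultiples (2 • h) := by
  obtain ⟨n, hn⟩ := mem_zmultiples_iff.mp (hG g)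
  obtain ⟨c, rfl | rfl⟩ := Int.even_or_odd' n
  · refine mem_zmultiples_iff.mpr ⟨c, ?_⟩
    rw [← hn, ← natCast_zsmul, smul_smul, mul_comm]
    norm_num
  · refine absurd ?_ (hh (g - c • h))
    rw [nsmul_sub, ← hn, ← natCast_zsmul, smul_smul, ← sub_smul]
    norm_num

variable {p : ℕ}

theorem addOrderOf_eq_prime_pow_succ_of_addOrderOf_nsmul {r : ℕ} [Fact p.Prime] {x : G}
    (hr : r ≠ 0) (hx : addOrderOf (p • x) = p ^ r) : addOrderOf x = p ^ (r + 1) := by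
  apply addOrderOf_eq_prime_pow
  · obtain ⟨r, rfl⟩ := Nat.exists_eq_add_one_of_ne_zero hr
    rw [pow_succ, mul_nsmul', ← addOrderOf_dvd_iff_nsmul_eq_zero, hx]
    exact (Nat.pow_dvd_pow_iff_le_right (Fact.out : p.Prime).one_lt).not.mpr (by omega)
  · rw [pow_succ, mul_nsmul', ← hx, addOrderOf_nsmul_eq_zero]

variable {g₀ : G}

theorem nsmul_mem_zmultiples_of_nsmul_mem_zmultiples_nsmul
    (hG : ∀ g : G, p • g ∈ zmultiples (p • g₀)) (g : G) : p • g ∈ zmultiples g₀ :=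
  zmultiples_le_of_mem (nsmul_mem (mem_zmultiples g₀) p) (hG g)

theorem exists_nsmul_eq_zero_sub_mem_zmultiples (hG : ∀ g : G, p • g ∈ zmultiples (p • g₀))
    (g : G) : ∃ x : G, p • x = 0 ∧ g - x ∈ zmultiples g₀ := by
  obtain ⟨n, hn⟩ := mem_zmultiples_iff.mp (hG g)
  refine ⟨g - n • g₀, ?_, by simp⟩
  rw [nsmul_sub, ← hn, smul_comm, sub_self]

theorem exists_section_of_nsmul_mem_zmultiples_nsmul [Fact p.Prime]
    (hG : ∀ g : G, p • g ∈ zmultiples (p • g₀)) :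
    ∃ s : G ⧸ zmultiples g₀ →+ G, ∀ q, (s q : G ⧸ zmultiples g₀) = q := by
  -- `have`, not `letI`: unfolded, these structures are a `match` on `p` that blocks instance search.
  have : Module (ZMod p) (G ⧸ zmultiples g₀) :=
    QuotientAddGroup.zmodModule (nsmul_mem_zmultiples_of_nsmul_mem_zmultiples_nsmul hG)
  have := torsionBy.zmodModule (A := G) (n := p)
  let π : torsionBy G p →ₗ[ZMod p] G ⧸ zmultiples g₀ :=
    ((QuotientAddGroup.mk' (zmultiples g₀)).comp (torsionBy G p).subtype).toZModLinearMap p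
  have hπ : Function.Surjective π := by
    rintro ⟨g⟩
    obtain ⟨x, hx, hgx⟩ := exists_nsmul_eq_zero_sub_mem_zmultiples hG g
    exact ⟨⟨x, torsionBy.nsmul_iff.mpr hx⟩, (QuotientAddGroup.eq_iff_sub_mem.mpr hgx).symm⟩
  obtain ⟨σ, hσ⟩ := π.exists_rightInverse_of_surjective (LinearMap.range_eq_top.mpr hπ)
  exact ⟨(torsionBy G p).subtype.comp σ.toAddMonoidHom, fun q ↦ LinearMap.congr_fun hσ q⟩

theorem nonempty_addEquiv_zmod_prod_fin_fun_of_nsmul_mem_zmultiples_nsmul [Fact p.Prime]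
    {m t : ℕ} (hg₀ : addOrderOf g₀ = p ^ m) (hG : ∀ g : G, p • g ∈ zmultiples (p • g₀))
    (hcard : Nat.card G = p ^ (m + t)) :
    Nonempty (G ≃+ ZMod (p ^ m) × (Fin t → ZMod p)) := by
  obtain ⟨s, hs⟩ := exists_section_of_nsmul_mem_zmultiples_nsmul hG
  obtain ⟨e⟩ := (zmultiples g₀).nonempty_addEquiv_prod_quotient_of_section s hs
  have hC : Nat.card (zmultiples g₀) = p ^ m := by rw [Nat.card_zmultiples, hg₀]
  have hQ : Nat.card (G ⧸ zmultiples g₀) = Nat.card (ZMod p) ^ t := by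
    have := card_eq_card_quotient_mul_card_addSubgroup (zmultiples g₀)
    rw [hcard, hC, pow_add, mul_comm (p ^ m)] at this
    rw [Nat.card_zmod]
    exact (Nat.eq_of_mul_eq_mul_right (pow_pos (Fact.out : p.Prime).pos m) this).symm
  have : Module (ZMod p) (G ⧸ zmultiples g₀) :=
    QuotientAddGroup.zmodModule (nsmul_mem_zmultiples_of_nsmul_mem_zmultiples_nsmul hG)
  obtain ⟨f⟩ := Module.nonempty_linearEquiv_fin_fun_of_natCard_eq hQ
  exact ⟨e.trans <| ((zmodAddCyclicAddEquiv inferInstance).symm.trans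
    (ZMod.ringEquivCongr hC).toAddEquiv).prodCongr f.toAddEquiv⟩

end

/-- If an abelian group `G` has a subgroup `H ≅ ℤ/2^r` (r ≥ 1) with quotient
`G/H ≅ (ℤ/2)^k` (k ≥ 1), then `G ≅ ℤ/2^(r+1) ⊕ (ℤ/2)^(k-1)` or `G ≅ ℤ/2^r ⊕ (ℤ/2)^k`. -/
theorem stmt_6 (G : Type*) [AddCommGroup G] (H : AddSubgroup G) (r k : ℕ)
    (hr : 1 ≤ r) (hk : 1 ≤ k)
    (hH : Nonempty (H ≃+ ZMod (2 ^ r)))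
    (hQ : Nonempty ((G ⧸ H) ≃+ (Fin k → ZMod 2))) :
    Nonempty (G ≃+ ZMod (2 ^ (r + 1)) × (Fin (k - 1) → ZMod 2)) ∨
    Nonempty (G ≃+ ZMod (2 ^ r) × (Fin k → ZMod 2)) := by
  obtain ⟨e⟩ := hH
  obtain ⟨f⟩ := hQ
  have hcard : Nat.card G = 2 ^ (r + k) := by
    rw [card_eq_card_quotient_mul_card_addSubgroup H, Nat.card_congr f.toEquiv,
      Nat.card_congr e.toEquiv]
    simp [pow_add, mul_comm]
  obtain ⟨h, hh, rfl⟩ := exists_addOrderOf_eq_and_eq_zmultiples e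
  have hG : ∀ g : G, 2 • g ∈ zmultiples h :=
    nsmul_mem_of_addEquiv_quotient f (ZModModule.char_nsmul_eq_zero 2)
  by_cases hdiv : ∃ g₀ : G, 2 • g₀ = h
  · obtain ⟨g₀, rfl⟩ := hdiv
    left
    refine nonempty_addEquiv_zmod_prod_fin_fun_of_nsmul_mem_zmultiples_nsmul
      (addOrderOf_eq_prime_pow_succ_of_addOrderOf_nsmul (by omega) hh) hG ?_
    rw [hcard]
    congr 1
    omega
  · push Not at hdiv
    exact .inr <| nonempty_addEquiv_zmod_prod_fin_fun_of_nsmul_mem_zmultiples_nsmul hh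
      (two_nsmul_mem_zmultiples_two_nsmul hG hdiv) hcard
end

section
/- Let G be an abelian group fitting into a short exact sequence 0 → ℤ/4 → G → (ℤ/2)^k → 0 (k ≥ 1), let a ∈ G denote the image of 2 ∈ ℤ/4, and let G' = G/⟨a⟩. Then G ≅ ℤ/8 ⊕ (ℤ/2)^{k-1} if and only if G' ≅ ℤ/4 ⊕ (ℤ/2)^{k-1}, and G ≅ ℤ/4 ⊕ (ℤ/2)^k if and only if G' ≅ ℤ/2 ⊕ (ℤ/2)^k. -/
/-!
Put `x = f 1`, so that `f 2 = 2 • x`; every double `2 • z` lies in `f (ℤ/4) = ⟨x⟩`.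
If `x = 2 • y` for some `y`, then `y` has order 8 and every double is a double of an element of
`N = ⟨y⟩`; otherwise every double lies in `{0, 2 • x}` and is a double of an element of `N = ⟨x⟩`.
Either way each class of `G ⧸ N` contains an element of order at most 2, so a section of the
`𝔽₂`-linear map from the 2-torsion of `G` onto `G ⧸ N` splits `G ≃ N × G ⧸ N`. With a count of
`G ⧸ ⟨y⟩` in the first case this gives `G ≅ ℤ/8 ⊕ (ℤ/2)^(k-1)`, resp. `G ≅ ℤ/4 ⊕ (ℤ/2)^k`.

In `ℤ/8 ⊕ E` (resp. `ℤ/4 ⊕ E`) with `E` elementary abelian, `f 2` is `(4, 0)` (resp. `(2, 0)`),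
so the quotient is `ℤ/4 ⊕ E` (resp. `ℤ/2 ⊕ E`). Only the first of these has an element of
order 4, which gives the converse implications.
-/

open Function AddSubgroup

section

variable {G : Type*} [AddCommGroup G]

section Splitting

variable {Q : Type*} [AddCommGroup Q] {p : ℕ} [Fact p.Prime] [Module (ZMod p) Q]

theorem AddMonoidHom.exists_comp_eq_id_of_forall_exists_nsmul_eq_zero (π : G →+ Q)
    (h : ∀ q, ∃ t, p • t = 0 ∧ π t = q) : ∃ σ : Q →+ G, π.comp σ = AddMonoidHom.id Q := by
  let T : AddSubgroup G := (nsmulAddMonoidHom p : G →+ G).ker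
  let _ : Module (ZMod p) T := AddCommGroup.zmodModule fun t => Subtype.ext t.2
  let πT : T →ₗ[ZMod p] Q := (π.comp T.subtype).toZModLinearMap p
  obtain ⟨σ, hσ⟩ := πT.exists_rightInverse_of_surjective <| LinearMap.range_eq_top.mpr
    fun q => (h q).elim fun t ht => ⟨⟨t, ht.1⟩, ht.2⟩
  exact ⟨T.subtype.comp σ.toAddMonoidHom, AddMonoidHom.ext (LinearMap.congr_fun hσ)⟩

theorem Function.Exact.nonempty_addEquiv_prod {N : Type*} [AddCommGroup N] {i : N →+ G}
    {π : G →+ Q} (hexact : Exact i π) (hi : Injective i) (hπ : Surjective π)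
    (hdouble : ∀ z, ∃ n, p • z = p • i n) : Nonempty (G ≃+ N × Q) := by
  obtain ⟨σ, hσ⟩ := π.exists_comp_eq_id_of_forall_exists_nsmul_eq_zero (p := p) fun q => by
    obtain ⟨z, rfl⟩ := hπ q
    obtain ⟨n, hn⟩ := hdouble z
    exact ⟨z - i n, by rw [nsmul_sub, hn, sub_self],
      by rw [map_sub, hexact.apply_apply_eq_zero, sub_zero]⟩
  let e := (Exact.splitSurjectiveEquiv (f := i.toIntLinearMap) (g := π.toIntLinearMap) hexact hi
    ⟨σ.toIntLinearMap, LinearMap.ext (DFunLike.congr_fun hσ :)⟩).1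
  exact ⟨e.toAddEquiv⟩

theorem nonempty_addEquiv_pi_zmod_of_natCard_eq {d : ℕ} (h : Nat.card Q = p ^ d) :
    Nonempty (Q ≃+ (Fin d → ZMod p)) := by
  have : Finite Q := Nat.finite_of_card_ne_zero (by simp [h, (Fact.out : p.Prime).ne_zero])
  have hd : Module.finrank (ZMod p) Q = d := by
    have := Module.natCard_eq_pow_finrank (K := ZMod p) (V := Q)
    rw [h, Nat.card_zmod] at this
    exact (Nat.pow_right_injective (Fact.out : p.Prime).two_le this).symm
  have : Module.Finite (ZMod p) Q := .of_finite
  exact ⟨(LinearEquiv.ofFinrankEq _ _ (hd.trans (Module.finrank_fin_fun _).symm)).toAddEquiv⟩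

end Splitting

theorem ZMod.ker_castHom_eq_zmultiples {m n : ℕ} (h : m ∣ n) :
    (ZMod.castHom h (ZMod m)).toAddMonoidHom.ker = zmultiples (m : ZMod n) := by
  ext c
  obtain ⟨j, rfl⟩ := ZMod.intCast_surjective c
  simp only [AddMonoidHom.mem_ker, RingHom.toAddMonoidHom_eq_coe, AddMonoidHom.coe_coe,
    map_intCast, ZMod.intCast_zmod_eq_zero_iff_dvd, mem_zmultiples_iff, zsmul_eq_mul]
  constructor
  · rintro ⟨t, rfl⟩
    exact ⟨t, by push_cast; ring⟩
  · rintro ⟨t, ht⟩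
    rw [← Int.cast_natCast, ← Int.cast_mul, ZMod.intCast_eq_intCast_iff_dvd_sub] at ht
    have := (Int.natCast_dvd_natCast.mpr h).trans ht
    simpa using (Int.dvd_iff_dvd_of_dvd_sub this).mpr (dvd_mul_left _ t)

theorem nonempty_quotient_zmultiples_addEquiv_prod {A B E : Type*} [AddCommGroup A]
    [AddCommGroup B] [AddCommGroup E] (e : G ≃+ A × E) (p : A →+ B) (hp : Surjective p) {a : G}
    (hker : p.ker = zmultiples (e a).1) (ha : (e a).2 = 0) :
    Nonempty (G ⧸ zmultiples a ≃+ B × E) := by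
  let φ : G →+ B × E := (p.prodMap (AddMonoidHom.id E)).comp e.toAddMonoidHom
  have hφ : Surjective φ := (hp.prodMap surjective_id).comp e.surjective
  have hkerφ : zmultiples a = φ.ker := by
    ext z
    change _ ↔ (p (e z).1, (e z).2) = 0
    rw [Prod.mk_eq_zero, ← AddMonoidHom.mem_ker, hker, mem_zmultiples_iff, mem_zmultiples_iff]
    constructor
    · rintro ⟨m, rfl⟩
      simp [ha]
    · rintro ⟨⟨m, hm⟩, hz⟩
      exact ⟨m, e.injective (Prod.ext (by simp [hm]) (by simp [ha, hz]))⟩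
  exact ⟨(QuotientAddGroup.quotientAddEquivOfEq hkerφ).trans
    (QuotientAddGroup.quotientKerEquivOfSurjective φ hφ)⟩

section Forward

variable {E : Type*} [AddCommGroup E] [Module (ZMod 2) E]

theorem nonempty_quotient_zmultiples_two_nsmul_addEquiv {m n : ℕ} (hmn : m ∣ n)
    (e : G ≃+ ZMod n × E) {x : G} (hx : 2 • (e x).1 = m) :
    Nonempty (G ⧸ zmultiples (2 • x) ≃+ ZMod m × E) := by
  have he : e (2 • x) = ((m : ZMod n), 0) := by
    rw [map_nsmul, Prod.smul_def, hx, ZModModule.char_nsmul_eq_zero]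
  refine nonempty_quotient_zmultiples_addEquiv_prod e (ZMod.castHom hmn (ZMod m)).toAddMonoidHom
    (ZMod.castHom_surjective hmn) ?_ (by rw [he])
  rw [he, ZMod.ker_castHom_eq_zmultiples]

theorem two_nsmul_fst_ne_zero {A : Type*} [AddCommGroup A] (e : G ≃+ A × E) {x : G}
    (hx : 2 • x ≠ 0) : 2 • (e x).1 ≠ 0 := by
  intro h
  apply hx
  rw [← e.map_eq_zero_iff, map_nsmul, Prod.smul_def, h, ZModModule.char_nsmul_eq_zero]
  rfl

theorem nonempty_quotient_addEquiv_zmod_four_prod (e : G ≃+ ZMod 8 × E) {x : G}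
    (hx : 2 • x ≠ 0) (hx' : 4 • x = 0) : Nonempty (G ⧸ zmultiples (2 • x) ≃+ ZMod 4 × E) := by
  have h2 : 2 • (e x).1 ≠ 0 := two_nsmul_fst_ne_zero e hx
  have h4 : 4 • (e x).1 = 0 := by rw [← Prod.smul_fst, ← map_nsmul, hx', map_zero]; rfl
  exact nonempty_quotient_zmultiples_two_nsmul_addEquiv (by norm_num) e <|
    (by decide : ∀ c : ZMod 8, 2 • c ≠ 0 → 4 • c = 0 → 2 • c = ((4 : ℕ) : ZMod 8)) _ h2 h4

theorem nonempty_quotient_addEquiv_zmod_two_prod (e : G ≃+ ZMod 4 × E) {x : G}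
    (hx : 2 • x ≠ 0) : Nonempty (G ⧸ zmultiples (2 • x) ≃+ ZMod 2 × E) :=
  nonempty_quotient_zmultiples_two_nsmul_addEquiv (by norm_num) e <|
    (by decide : ∀ c : ZMod 4, 2 • c ≠ 0 → 2 • c = ((2 : ℕ) : ZMod 4)) _ (two_nsmul_fst_ne_zero e hx)

end Forward

theorem AddEquiv.isEmpty_of_two_nsmul_ne_zero {A B : Type*} [AddCommGroup A] [AddCommGroup B]
    [Module (ZMod 2) B] {a : A} (ha : 2 • a ≠ 0) : IsEmpty (A ≃+ B) :=
  ⟨fun e => ha <| e.injective <| by rw [map_nsmul, ZModModule.char_nsmul_eq_zero, map_zero]⟩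

theorem AddMonoidHom.natCard_eq_mul_of_range_eq_ker {A B : Type*} [AddCommGroup A]
    [AddCommGroup B] {f : A →+ G} {g : G →+ B} (hf : Injective f) (hg : Surjective g)
    (hexact : f.range = g.ker) : Nat.card G = Nat.card B * Nat.card A := by
  rw [card_eq_card_quotient_mul_card_addSubgroup g.ker,
    Nat.card_congr (QuotientAddGroup.quotientKerEquivOfSurjective g hg).toEquiv, ← hexact,
    Nat.card_congr (AddMonoidHom.ofInjective hf).toEquiv]

section Extension

variable {k : ℕ} {f : ZMod 4 →+ G} {g : G →+ (Fin k → ZMod 2)}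

theorem exists_two_nsmul_eq_apply (hexact : f.range = g.ker) (z : G) : ∃ m, 2 • z = f m := by
  have : 2 • z ∈ g.ker := by
    rw [AddMonoidHom.mem_ker, map_nsmul, ZModModule.char_nsmul_eq_zero]
  rw [← hexact] at this
  obtain ⟨m, hm⟩ := this
  exact ⟨m, hm.symm⟩

theorem nonempty_addEquiv_zmod_four_prod_of_forall_two_nsmul_ne (hf : Injective f)
    (hg : Surjective g) (hexact : f.range = g.ker) (hx : ∀ y, 2 • y ≠ f 1) :
    Nonempty (G ≃+ ZMod 4 × (Fin k → ZMod 2)) := by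
  refine (AddMonoidHom.exact_iff.mpr hexact.symm).nonempty_addEquiv_prod (p := 2) hf hg
    fun z => ?_
  obtain ⟨m, hm⟩ := exists_two_nsmul_eq_apply hexact z
  rcases (by decide : ∀ m : ZMod 4, m = 1 ∨ m = -1 ∨ ∃ n, 2 • n = m) m with rfl | rfl | ⟨n, rfl⟩
  · exact absurd hm (hx z)
  · exact absurd (by rw [smul_neg, hm, map_neg, neg_neg]) (hx (-z))
  · exact ⟨n, by rw [hm, map_nsmul]⟩

theorem nonempty_addEquiv_zmod_eight_prod_of_two_nsmul_eq (hk : 1 ≤ k) (hf : Injective f)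
    (hg : Surjective g) (hexact : f.range = g.ker) {y : G} (hy : 2 • y = f 1) :
    Nonempty (G ≃+ ZMod 8 × (Fin (k - 1) → ZMod 2)) := by
  set N := zmultiples y
  have hdouble : ∀ z, ∃ n : N, 2 • z = 2 • (n : G) := by
    intro z
    obtain ⟨m, hm⟩ := exists_two_nsmul_eq_apply hexact z
    have hfm : f m = m.val • f 1 := by rw [← map_nsmul, nsmul_one, ZMod.natCast_zmod_val]
    exact ⟨⟨m.val • y, nsmul_mem (mem_zmultiples y) _⟩, by rw [hm, hfm, ← hy, smul_comm]⟩
  let _ : Module (ZMod 2) (G ⧸ N) := QuotientAddGroup.zmodModule fun z =>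
    (hdouble z).elim fun n hn => hn ▸ nsmul_mem n.2 2
  have hexactN : Exact N.subtype (QuotientAddGroup.mk' N) :=
    AddMonoidHom.exact_iff.mpr (by rw [QuotientAddGroup.ker_mk', range_subtype])
  obtain ⟨e⟩ := hexactN.nonempty_addEquiv_prod N.subtype_injective
    (QuotientAddGroup.mk'_surjective N) hdouble
  have hN : Nat.card N = 8 := by
    rw [Nat.card_zmultiples]
    refine addOrderOf_eq_prime_pow (p := 2) (n := 2) ?_ ?_
    · rw [pow_two, mul_nsmul, hy, ← map_nsmul, ← ne_eq, map_ne_zero_iff f hf]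
      decide
    · rw [pow_succ, mul_nsmul, pow_two, mul_nsmul, hy, ← map_nsmul, ← map_nsmul, show 2 • 2 • (1 : ZMod 4) = 0 by decide, map_zero]
  have hQ : Nat.card (G ⧸ N) = 2 ^ (k - 1) := by
    have hcard : 2 ^ k * 4 = Nat.card (G ⧸ N) * 8 := by
      simpa [hN, AddMonoidHom.natCard_eq_mul_of_range_eq_ker hf hg hexact] using
        card_eq_card_quotient_mul_card_addSubgroup N
    obtain ⟨j, rfl⟩ : ∃ j, k = j + 1 := ⟨k - 1, by omega⟩
    rw [pow_succ] at hcard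
    rw [Nat.add_sub_cancel]
    omega
  obtain ⟨eQ⟩ := nonempty_addEquiv_pi_zmod_of_natCard_eq hQ
  exact ⟨e.trans (((zmodAddCyclicAddEquiv inferInstance).symm.trans
    (ZMod.ringEquivCongr hN).toAddEquiv).prodCongr eQ)⟩

theorem nonempty_addEquiv_zmod_eight_prod_or_zmod_four_prod (hk : 1 ≤ k) (hf : Injective f)
    (hg : Surjective g) (hexact : f.range = g.ker) :
    Nonempty (G ≃+ ZMod 8 × (Fin (k - 1) → ZMod 2)) ∨
      Nonempty (G ≃+ ZMod 4 × (Fin k → ZMod 2)) := by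
  by_cases hy : ∃ y, 2 • y = f 1
  · exact .inl (nonempty_addEquiv_zmod_eight_prod_of_two_nsmul_eq hk hf hg hexact hy.choose_spec)
  · exact .inr (nonempty_addEquiv_zmod_four_prod_of_forall_two_nsmul_ne hf hg hexact
      (not_exists.mp hy))

end Extension

end

/-- Lemma 3.6: for an extension 0 → ℤ/4 → G → (ℤ/2)^k → 0 with a the image of 2 ∈ ℤ/4
and G' = G/⟨a⟩, one has G ≅ ℤ/8 ⊕ (ℤ/2)^(k-1) iff G' ≅ ℤ/4 ⊕ (ℤ/2)^(k-1), and
G ≅ ℤ/4 ⊕ (ℤ/2)^k iff G' ≅ ℤ/2 ⊕ (ℤ/2)^k. -/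
theorem stmt_7 (G : Type*) [AddCommGroup G] (k : ℕ) (hk : 1 ≤ k)
    (f : ZMod 4 →+ G) (g : G →+ (Fin k → ZMod 2))
    (hf : Function.Injective f) (hg : Function.Surjective g)
    (hexact : f.range = g.ker) :
    (Nonempty (G ≃+ ZMod 8 × (Fin (k - 1) → ZMod 2)) ↔
      Nonempty ((G ⧸ AddSubgroup.zmultiples (f 2)) ≃+ ZMod 4 × (Fin (k - 1) → ZMod 2))) ∧
    (Nonempty (G ≃+ ZMod 4 × (Fin k → ZMod 2)) ↔
      Nonempty ((G ⧸ AddSubgroup.zmultiples (f 2)) ≃+ ZMod 2 × (Fin k → ZMod 2))) := by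
  have hf2 : f 2 = 2 • f 1 := by rw [← map_nsmul]; rfl
  have hx : 2 • f 1 ≠ 0 := by rw [← hf2, map_ne_zero_iff f hf]; decide
  have hx' : 4 • f 1 = 0 := by rw [← map_nsmul, show 4 • (1 : ZMod 4) = 0 by decide, map_zero]
  have hG := nonempty_addEquiv_zmod_eight_prod_or_zmod_four_prod hk hf hg hexact
  have h8 : Nonempty (G ≃+ ZMod 8 × (Fin (k - 1) → ZMod 2)) →
      Nonempty (G ⧸ zmultiples (2 • f 1) ≃+ ZMod 4 × (Fin (k - 1) → ZMod 2)) :=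
    fun ⟨e⟩ => nonempty_quotient_addEquiv_zmod_four_prod e hx hx'
  have h4 : Nonempty (G ≃+ ZMod 4 × (Fin k → ZMod 2)) →
      Nonempty (G ⧸ zmultiples (2 • f 1) ≃+ ZMod 2 × (Fin k → ZMod 2)) :=
    fun ⟨e⟩ => nonempty_quotient_addEquiv_zmod_two_prod e hx
  have hQ : ¬(Nonempty (G ⧸ zmultiples (2 • f 1) ≃+ ZMod 4 × (Fin (k - 1) → ZMod 2)) ∧
      Nonempty (G ⧸ zmultiples (2 • f 1) ≃+ ZMod 2 × (Fin k → ZMod 2))) := fun ⟨⟨e₄⟩, ⟨e₂⟩⟩ =>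
    (AddEquiv.isEmpty_of_two_nsmul_ne_zero (a := ((1 : ZMod 4), 0))
      (ne_of_apply_ne Prod.fst (show 2 • (1 : ZMod 4) ≠ 0 by decide))).false (e₄.symm.trans e₂)
  rw [hf2]
  tauto
end
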